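/- arXiv:1408.0482 — 3 statements merged into one kernel-verified Lean document; each statement's English description precedes it below -/
import Mathlib

section
/- Every group formation game with separable and symmetric utilities admits a pure Nash equilibrium: if M is a finite nonempty set of players, N a finite nonempty set of strategies, v : M × M × N → ℝ satisfies v(x,y,j) = v(y,x,j) for all x,y,j, and u_x(σ) = Σ_{y : σ(y)=σ(x)} v(x,y,σ(x)), then there exists a strategy profile σ : M → N such that for every player x ∈ M and every strategy s ∈ N, u_x(σ) ≥ u_x(σ[x↦s]). -/
open Finset

/-- Utility of player `x` at profile `σ`: sum of the symmetric bipartite utility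
`v x y (σ x)` over all players `y` in the same group as `x` (including `y = x`). -/
noncomputable def groupUtility {M N : Type*} [Fintype M] [DecidableEq N]
    (v : M → M → N → ℝ) (σ : M → N) (x : M) : ℝ :=
  ∑ y ∈ univ.filter (fun y => σ y = σ x), v x y (σ x)

/-- The (doubled) exact potential of the game. -/
noncomputable def phiAux {M N : Type*} [Fintype M] [DecidableEq N]
    (v : M → M → N → ℝ) (σ : M → N) : ℝ :=
  (∑ a, ∑ b, if σ b = σ a then v a b (σ a) else 0) + ∑ a, v a a (σ a)

lemma groupUtility_eq {M N : Type*} [Fintype M] [DecidableEq N]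
    (v : M → M → N → ℝ) (σ : M → N) (x : M) :
    groupUtility v σ x = ∑ y, if σ y = σ x then v x y (σ x) else 0 := by
  rw [groupUtility, Finset.sum_filter]

lemma phiAux_decomp {M N : Type*} [Fintype M] [DecidableEq M] [DecidableEq N]
    (v : M → M → N → ℝ) (hsym : ∀ x y j, v x y j = v y x j) (σ : M → N) (x : M) :
    phiAux v σ = 2 * groupUtility v σ x
      + (∑ a ∈ univ.erase x, ∑ b ∈ univ.erase x, if σ b = σ a then v a b (σ a) else 0)
      + ∑ a ∈ univ.erase x, v a a (σ a) := by
  have h1 : (∑ a, ∑ b, if σ b = σ a then v a b (σ a) else 0)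
      = (∑ b, if σ b = σ x then v x b (σ x) else 0)
      + ∑ a ∈ univ.erase x, ∑ b, if σ b = σ a then v a b (σ a) else 0 := by
    rw [← Finset.add_sum_erase _ _ (mem_univ x)]
  have h2 : ∀ a ∈ univ.erase x,
      (∑ b, if σ b = σ a then v a b (σ a) else 0)
      = (if σ x = σ a then v a x (σ a) else 0)
        + ∑ b ∈ univ.erase x, if σ b = σ a then v a b (σ a) else 0 := by
    intro a _; rw [← Finset.add_sum_erase _ _ (mem_univ x)]
  have h3 : (∑ a ∈ univ.erase x, if σ x = σ a then v a x (σ a) else 0)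
      = groupUtility v σ x - v x x (σ x) := by
    have hu : groupUtility v σ x = (if σ x = σ x then v x x (σ x) else 0)
        + ∑ a ∈ univ.erase x, if σ a = σ x then v x a (σ x) else 0 := by
      rw [groupUtility_eq, ← Finset.add_sum_erase _ _ (mem_univ x)]
    have hc : ∀ a ∈ univ.erase x, (if σ x = σ a then v a x (σ a) else 0)
        = (if σ a = σ x then v x a (σ x) else 0) := by
      intro a _
      by_cases h : σ a = σ x
      · rw [if_pos h.symm, if_pos h, h, hsym]
      · rw [if_neg (fun hh => h hh.symm), if_neg h]
    rw [Finset.sum_congr rfl hc, hu, if_pos rfl]; ring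
  have h4 : (∑ a, v a a (σ a)) = v x x (σ x) + ∑ a ∈ univ.erase x, v a a (σ a) := by
    rw [← Finset.add_sum_erase _ _ (mem_univ x)]
  rw [phiAux, h1, Finset.sum_congr rfl h2, Finset.sum_add_distrib, h3, h4,
    ← groupUtility_eq]
  ring

/-- Every group formation game with separable and symmetric utilities admits a
pure Nash equilibrium. -/
theorem group_formation_game_has_pure_nash {M N : Type*}
    [Fintype M] [DecidableEq M] [Nonempty M]
    [Fintype N] [DecidableEq N] [Nonempty N]
    (v : M → M → N → ℝ) (hsym : ∀ x y j, v x y j = v y x j) :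
    ∃ σ : M → N, ∀ (x : M) (s : N),
      groupUtility v σ x ≥ groupUtility v (Function.update σ x s) x := by
  classical
  obtain ⟨σ, hσ⟩ := Finite.exists_max (phiAux v)
  refine ⟨σ, fun x s => ?_⟩
  set σ' := Function.update σ x s with hσ'
  have hagree : ∀ a : M, a ≠ x → σ' a = σ a := fun a ha =>
    Function.update_of_ne ha _ _
  have hR : (∑ a ∈ univ.erase x, ∑ b ∈ univ.erase x,
        if σ' b = σ' a then v a b (σ' a) else 0)
      = ∑ a ∈ univ.erase x, ∑ b ∈ univ.erase x,
        if σ b = σ a then v a b (σ a) else 0 := by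
    refine Finset.sum_congr rfl fun a ha => Finset.sum_congr rfl fun b hb => ?_
    rw [hagree a (Finset.ne_of_mem_erase ha), hagree b (Finset.ne_of_mem_erase hb)]
  have hS : (∑ a ∈ univ.erase x, v a a (σ' a)) = ∑ a ∈ univ.erase x, v a a (σ a) := by
    refine Finset.sum_congr rfl fun a ha => ?_
    rw [hagree a (Finset.ne_of_mem_erase ha)]
  have h1 := phiAux_decomp v hsym σ x
  have h2 := phiAux_decomp v hsym σ' x
  have hle := hσ σ'
  rw [h1, h2, hR, hS] at hle
  linarith
end

section
/- In a group formation game with symmetric bipartite utility, every local maximum of the potential function is a pure Nash equilibrium: with M, N finite and nonempty, v : M × M × N → ℝ symmetric, u_x(σ) = Σ_{y : σ(y)=σ(x)} v(x,y,σ(x)), and Φ(σ) = Σ_{j ∈ N} ( Σ_{a : σ(a)=j} v(a,a,j) + (1/2) Σ_{a : σ(a)=j} Σ_{b : σ(b)=j, b ≠ a} v(a,b,j) ), if a profile σ satisfies Φ(σ) ≥ Φ(σ[x↦s]) for every x ∈ M and s ∈ N, then u_x(σ) ≥ u_x(σ[x↦s]) for every x ∈ M and s ∈ N. -/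
open Finset

/-- The potential function of the group formation game. -/
noncomputable def groupPotential {M N : Type*} [Fintype M] [DecidableEq M]
    [Fintype N] [DecidableEq N] (v : M → M → N → ℝ) (σ : M → N) : ℝ :=
  ∑ j, ((∑ a ∈ univ.filter (fun a => σ a = j), v a a j)
    + (1 / 2) * ∑ a ∈ univ.filter (fun a => σ a = j),
        ∑ b ∈ (univ.filter (fun b => σ b = j)).erase a, v a b j)

/-- Alternative form of the potential: a sum over players. -/
lemma groupPotential_alt {M N : Type*} [Fintype M] [DecidableEq M]
    [Fintype N] [DecidableEq N] (v : M → M → N → ℝ) (σ : M → N) :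
    groupPotential v σ = (∑ a, v a a (σ a))
      + (1 / 2) * ∑ a, ∑ b ∈ (univ.erase a).filter (fun b => σ b = σ a), v a b (σ a) := by
  unfold groupPotential
  rw [Finset.sum_add_distrib, ← Finset.mul_sum]
  congr 1
  · rw [← Finset.sum_fiberwise univ σ (fun a => v a a (σ a))]
    refine Finset.sum_congr rfl fun j _ => Finset.sum_congr rfl fun a ha => ?_
    simp only [mem_filter] at ha
    rw [ha.2]
  · congr 1
    rw [← Finset.sum_fiberwise univ σ
      (fun a => ∑ b ∈ (univ.erase a).filter (fun b => σ b = σ a), v a b (σ a))]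
    refine Finset.sum_congr rfl fun j _ => Finset.sum_congr rfl fun a ha => ?_
    simp only [mem_filter] at ha
    rw [Finset.filter_erase, ha.2]

/-- Key identity: the potential is an exact potential for the game. -/
lemma potential_diff {M N : Type*} [Fintype M] [DecidableEq M]
    [Fintype N] [DecidableEq N]
    (v : M → M → N → ℝ) (hsym : ∀ x y j, v x y j = v y x j)
    (σ : M → N) (x : M) (s : N) :
    groupPotential v σ - groupPotential v (Function.update σ x s)
      = groupUtility v σ x - groupUtility v (Function.update σ x s) x := by
  set σ' := Function.update σ x s with hσ'
  have hx' : σ' x = s := Function.update_self x s σ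
  have hoth : ∀ b, b ≠ x → σ' b = σ b := fun b hb => Function.update_of_ne hb s σ
  set P : ℝ := ∑ b ∈ univ.erase x, (if σ b = σ x then v x b (σ x) else 0) with hP
  set Q : ℝ := ∑ b ∈ univ.erase x, (if σ b = s then v x b s else 0) with hQ
  -- utilities
  have hu1 : groupUtility v σ x = v x x (σ x) + P := by
    unfold groupUtility
    rw [Finset.sum_filter, ← Finset.add_sum_erase _ _ (mem_univ x), if_pos rfl]
  have hu2 : groupUtility v σ' x = v x x s + Q := by
    unfold groupUtility
    rw [Finset.sum_filter, ← Finset.add_sum_erase _ _ (mem_univ x), if_pos rfl, hx']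
    congr 1
    refine Finset.sum_congr rfl fun b hb => ?_
    rw [hoth b (mem_erase.mp hb).1]
  -- diagonal part
  have hA : (∑ a, v a a (σ a)) - (∑ a, v a a (σ' a)) = v x x (σ x) - v x x s := by
    rw [← Finset.add_sum_erase univ (fun a => v a a (σ a)) (mem_univ x),
        ← Finset.add_sum_erase univ (fun a => v a a (σ' a)) (mem_univ x), hx']
    have : ∑ a ∈ univ.erase x, v a a (σ' a) = ∑ a ∈ univ.erase x, v a a (σ a) :=
      Finset.sum_congr rfl fun a ha => by rw [hoth a (mem_erase.mp ha).1]
    rw [this]; ring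
  -- off-diagonal part, per player a ≠ x
  have hS : ∀ a ∈ univ.erase x,
      (∑ b ∈ (univ.erase a).filter (fun b => σ b = σ a), v a b (σ a))
        - (∑ b ∈ (univ.erase a).filter (fun b => σ' b = σ' a), v a b (σ' a))
      = (if σ a = σ x then v x a (σ x) else 0) - (if σ a = s then v x a s else 0) := by
    intro a ha
    have hax : a ≠ x := (mem_erase.mp ha).1
    have hxa : x ∈ univ.erase a := mem_erase.mpr ⟨hax.symm, mem_univ x⟩
    have h1 : (∑ b ∈ (univ.erase a).filter (fun b => σ b = σ a), v a b (σ a))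
        = (if σ x = σ a then v a x (σ a) else 0)
          + ∑ b ∈ (univ.erase a).erase x, (if σ b = σ a then v a b (σ a) else 0) := by
      rw [Finset.sum_filter, ← Finset.add_sum_erase _ _ hxa]
    have h2 : (∑ b ∈ (univ.erase a).filter (fun b => σ' b = σ' a), v a b (σ' a))
        = (if s = σ a then v a x (σ a) else 0)
          + ∑ b ∈ (univ.erase a).erase x, (if σ b = σ a then v a b (σ a) else 0) := by
      rw [Finset.sum_filter, ← Finset.add_sum_erase _ _ hxa, hoth a hax, hx']
      congr 1
      refine Finset.sum_congr rfl fun b hb => ?_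
      rw [hoth b (mem_erase.mp hb).1]
    rw [h1, h2]
    have e1 : (if σ x = σ a then v a x (σ a) else 0)
        = (if σ a = σ x then v x a (σ x) else 0) := by
      by_cases h : σ a = σ x
      · rw [if_pos h.symm, if_pos h, h, hsym]
      · rw [if_neg (fun hh => h hh.symm), if_neg h]
    have e2 : (if s = σ a then v a x (σ a) else 0)
        = (if σ a = s then v x a s else 0) := by
      by_cases h : σ a = s
      · rw [if_pos h.symm, if_pos h, h, hsym]
      · rw [if_neg (fun hh => h hh.symm), if_neg h]
    rw [e1, e2]; ring
  -- off-diagonal part, player x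
  have hSx1 : (∑ b ∈ (univ.erase x).filter (fun b => σ b = σ x), v x b (σ x)) = P := by
    rw [Finset.sum_filter]
  have hSx2 : (∑ b ∈ (univ.erase x).filter (fun b => σ' b = σ' x), v x b (σ' x)) = Q := by
    rw [Finset.sum_filter, hx']
    refine Finset.sum_congr rfl fun b hb => ?_
    rw [hoth b (mem_erase.mp hb).1]
  have hB : (∑ a, ∑ b ∈ (univ.erase a).filter (fun b => σ b = σ a), v a b (σ a))
      - (∑ a, ∑ b ∈ (univ.erase a).filter (fun b => σ' b = σ' a), v a b (σ' a))
      = 2 * (P - Q) := by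
    rw [← Finset.add_sum_erase univ
        (fun a => ∑ b ∈ (univ.erase a).filter (fun b => σ b = σ a), v a b (σ a)) (mem_univ x),
        ← Finset.add_sum_erase univ
        (fun a => ∑ b ∈ (univ.erase a).filter (fun b => σ' b = σ' a), v a b (σ' a)) (mem_univ x)]
    have htail : (∑ a ∈ univ.erase x, ∑ b ∈ (univ.erase a).filter (fun b => σ b = σ a), v a b (σ a))
        - (∑ a ∈ univ.erase x, ∑ b ∈ (univ.erase a).filter (fun b => σ' b = σ' a), v a b (σ' a))
        = P - Q := by
      rw [← Finset.sum_sub_distrib, Finset.sum_congr rfl hS, Finset.sum_sub_distrib, hP, hQ]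
    rw [hSx1, hSx2]
    have := htail
    linarith
  rw [groupPotential_alt, groupPotential_alt, hu1, hu2]
  linarith

/-- Every local maximum of the potential function (with respect to unilateral
deviations) is a pure Nash equilibrium of the group formation game. -/
theorem local_max_of_potential_is_nash {M N : Type*}
    [Fintype M] [DecidableEq M] [Nonempty M]
    [Fintype N] [DecidableEq N] [Nonempty N]
    (v : M → M → N → ℝ) (hsym : ∀ x y j, v x y j = v y x j)
    (σ : M → N)
    (hloc : ∀ (x : M) (s : N),
      groupPotential v σ ≥ groupPotential v (Function.update σ x s)) :
    ∀ (x : M) (s : N),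
      groupUtility v σ x ≥ groupUtility v (Function.update σ x s) x := by
  intro x s
  have h := potential_diff v hsym σ x s
  have h2 := hloc x s
  linarith
end

section
/- The collection of candidate assignments can be reduced from n(2^m − 1) pairs to at most nm pairs without changing the optimum: let M, N be finite nonempty sets with |M| = m, |N| = n, let p : M × N → ℝ with p(i,j) ≥ 0, and let q(S,j) = max_{i∈S} p(i,j) for nonempty S ⊆ M. For k ∈ M and j ∈ N define S_{k,j} = {i ∈ M : p(i,j) ≤ p(k,j)}. Then (a) for every nonempty S ⊆ M and every j ∈ N there exists k ∈ S with S ⊆ S_{k,j} and q(S_{k,j}, j) = q(S,j); and (b) the minimum cover cost of M over all assignment pairs {(S,j) : ∅ ≠ S ⊆ M, j ∈ N} equals the minimum cover cost over the reduced collection {(S_{k,j}, j) : k ∈ M, j ∈ N}, which contains at most nm pairs. -/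
open Finset

/-- Cost of an assignment pair `(S, j)`: the maximal power cost `p i j` over
mobiles `i ∈ S` (and `0` if `S` is empty). -/
noncomputable def pairCost {M N : Type*} (p : M → N → ℝ)
    (c : Finset M × N) : ℝ :=
  if h : c.1.Nonempty then c.1.sup' h (fun i => p i c.2) else 0

/-- A family of assignment pairs covers the set of mobiles `M` if every mobile
belongs to the mobile set of some pair of the family. -/
def CoversAll {M N : Type*} (𝒞 : Finset (Finset M × N)) : Prop :=
  ∀ i : M, ∃ c ∈ 𝒞, i ∈ c.1

/-- The candidate set `S_{k,j}` of all mobiles whose power cost at base station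
`j` does not exceed that of mobile `k`. -/
noncomputable def candSet {M N : Type*} [Fintype M] (p : M → N → ℝ) (k : M) (j : N) :
    Finset M :=
  univ.filter (fun i => p i j ≤ p k j)

/-! An assignment pair `(S, j)` costs the power of its most expensive mobile `k ∈ S`, and
`S ⊆ S_{k,j}` while `(S_{k,j}, j)` costs the same. Replacing every pair of a cover by its
candidate pair therefore gives a cover from the reduced collection at no higher cost (merging
pairs only helps, since costs are nonnegative); conversely, every reduced cover is a cover. -/

section

variable {M N : Type*} (p : M → N → ℝ)

@[simp]
lemma mem_candSet [Fintype M] {i k : M} {j : N} : i ∈ candSet p k j ↔ p i j ≤ p k j := by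
  simp [candSet]

lemma self_mem_candSet [Fintype M] (k : M) (j : N) : k ∈ candSet p k j :=
  (mem_candSet p).2 le_rfl

lemma pairCost_nonneg (hp : ∀ i j, 0 ≤ p i j) (c : Finset M × N) : 0 ≤ pairCost p c := by
  unfold pairCost
  split_ifs with hc
  · obtain ⟨i, hi⟩ := hc
    exact (hp i c.2).trans (le_sup' (fun i => p i c.2) hi)
  · exact le_rfl

lemma pairCost_eq_of_forall_le {S : Finset M} {j : N} {k : M} (hk : k ∈ S)
    (hmax : ∀ i ∈ S, p i j ≤ p k j) : pairCost p (S, j) = p k j := by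
  rw [pairCost, dif_pos ⟨k, hk⟩]
  exact le_antisymm (sup'_le _ _ hmax) (le_sup' (fun i => p i j) hk)

lemma pairCost_candSet [Fintype M] (k : M) (j : N) : pairCost p (candSet p k j, j) = p k j :=
  pairCost_eq_of_forall_le p (self_mem_candSet p k j) fun _ => (mem_candSet p).1

lemma exists_subset_candSet_pairCost_eq [Fintype M] {S : Finset M} (hS : S.Nonempty) (j : N) :
    ∃ k ∈ S, S ⊆ candSet p k j ∧ pairCost p (candSet p k j, j) = pairCost p (S, j) := by
  obtain ⟨k, hk, hmax⟩ := S.exists_max_image (fun i => p i j) hS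
  refine ⟨k, hk, fun i hi => (mem_candSet p).2 (hmax i hi), ?_⟩
  rw [pairCost_candSet, pairCost_eq_of_forall_le p hk hmax]

noncomputable def candPairs [Fintype M] [DecidableEq M] [Fintype N] [DecidableEq N] :
    Finset (Finset M × N) :=
  univ.image fun kj : M × N => (candSet p kj.1 kj.2, kj.2)

lemma card_candPairs_le [Fintype M] [DecidableEq M] [Fintype N] [DecidableEq N] :
    (candPairs p).card ≤ Fintype.card N * Fintype.card M :=
  card_image_le.trans (by simp [mul_comm])

lemma exists_subset_candPairs_coversAll_sum_le [Fintype M] [DecidableEq M] [Fintype N]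
    [DecidableEq N] (hp : ∀ i j, 0 ≤ p i j) {𝒞 : Finset (Finset M × N)}
    (hne : ∀ c ∈ 𝒞, c.1.Nonempty) (hcov : CoversAll 𝒞) :
    ∃ 𝒟 ⊆ candPairs p, CoversAll 𝒟 ∧ ∑ c ∈ 𝒟, pairCost p c ≤ ∑ c ∈ 𝒞, pairCost p c := by
  choose k hk using fun c : 𝒞 => exists_subset_candSet_pairCost_eq p (hne c c.2) c.1.2
  let reduce : 𝒞 → Finset M × N := fun c => (candSet p (k c) c.1.2, c.1.2)
  refine ⟨𝒞.attach.image reduce, ?_, ?_, ?_⟩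
  · exact image_subset_iff.2 fun c _ => mem_image_of_mem _ (mem_univ (k c, c.1.2))
  · intro i
    obtain ⟨c, hc, hi⟩ := hcov i
    exact ⟨reduce ⟨c, hc⟩, mem_image_of_mem _ (mem_attach _ _), (hk ⟨c, hc⟩).2.1 hi⟩
  · calc ∑ c ∈ 𝒞.attach.image reduce, pairCost p c
        ≤ ∑ c ∈ 𝒞.attach, pairCost p (reduce c) :=
          sum_image_le_of_nonneg fun c _ => pairCost_nonneg p hp c
      _ = ∑ c ∈ 𝒞.attach, pairCost p c.1 := sum_congr rfl fun c _ => (hk c).2.2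
      _ = ∑ c ∈ 𝒞, pairCost p c := sum_attach 𝒞 (pairCost p)

lemma nonempty_of_mem_candPairs [Fintype M] [DecidableEq M] [Fintype N] [DecidableEq N]
    {c : Finset M × N} (hc : c ∈ candPairs p) : c.1.Nonempty := by
  obtain ⟨kj, -, rfl⟩ := mem_image.1 hc
  exact ⟨kj.1, self_mem_candSet p kj.1 kj.2⟩

end

theorem reduced_collection_preserves_optimum_general {M N : Type*}
    [Fintype M] [DecidableEq M]
    [Fintype N] [DecidableEq N]
    (p : M → N → ℝ) (hp : ∀ i j, 0 ≤ p i j) :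
    (∀ S : Finset M, S.Nonempty → ∀ j : N, ∃ k ∈ S,
        S ⊆ candSet p k j ∧ pairCost p (candSet p k j, j) = pairCost p (S, j)) ∧
    (sInf {r : ℝ | ∃ 𝒞 : Finset (Finset M × N),
          (∀ c ∈ 𝒞, c.1.Nonempty) ∧ CoversAll 𝒞 ∧
          r = ∑ c ∈ 𝒞, pairCost p c}
        = sInf {r : ℝ | ∃ 𝒞 ⊆ image (fun kj : M × N => (candSet p kj.1 kj.2, kj.2)) univ,
            CoversAll 𝒞 ∧ r = ∑ c ∈ 𝒞, pairCost p c}) ∧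
    (image (fun kj : M × N => (candSet p kj.1 kj.2, kj.2)) univ).card
      ≤ Fintype.card N * Fintype.card M := by
  refine ⟨fun S hS j => exists_subset_candSet_pairCost_eq p hS j, ?_, card_candPairs_le p⟩
  apply csInf_eq_csInf_of_forall_exists_le
  · rintro _ ⟨𝒞, hne, hcov, rfl⟩
    obtain ⟨𝒟, h𝒟, hcov𝒟, hle⟩ := exists_subset_candPairs_coversAll_sum_le p hp hne hcov
    exact ⟨_, ⟨𝒟, h𝒟, hcov𝒟, rfl⟩, hle⟩
  · rintro _ ⟨𝒟, h𝒟, hcov, rfl⟩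
    exact ⟨_, ⟨𝒟, fun c hc => nonempty_of_mem_candPairs p (h𝒟 hc), hcov, rfl⟩, le_rfl⟩

/-- Reduction of the collection of candidate assignments: (a) every assignment
pair `(S, j)` is dominated, at equal cost, by a pair `(S_{k,j}, j)` with
`k ∈ S`; (b) the minimal cover cost over all assignment pairs equals the
minimal cover cost over the reduced collection `{(S_{k,j}, j) : k ∈ M, j ∈ N}`,
which contains at most `n·m` pairs. -/
theorem reduced_collection_preserves_optimum {M N : Type*}
    [Fintype M] [DecidableEq M] [Nonempty M]
    [Fintype N] [DecidableEq N] [Nonempty N]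
    (p : M → N → ℝ) (hp : ∀ i j, 0 ≤ p i j) :
    (∀ S : Finset M, S.Nonempty → ∀ j : N, ∃ k ∈ S,
        S ⊆ candSet p k j ∧ pairCost p (candSet p k j, j) = pairCost p (S, j)) ∧
    (sInf {r : ℝ | ∃ 𝒞 : Finset (Finset M × N),
          (∀ c ∈ 𝒞, c.1.Nonempty) ∧ CoversAll 𝒞 ∧
          r = ∑ c ∈ 𝒞, pairCost p c}
        = sInf {r : ℝ | ∃ 𝒞 ⊆ image (fun kj : M × N => (candSet p kj.1 kj.2, kj.2)) univ,
            CoversAll 𝒞 ∧ r = ∑ c ∈ 𝒞, pairCost p c}) ∧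
    (image (fun kj : M × N => (candSet p kj.1 kj.2, kj.2)) univ).card
      ≤ Fintype.card N * Fintype.card M :=
  reduced_collection_preserves_optimum_general p hp
end
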